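/- arXiv:2110.05897 — 3 statements merged into one kernel-verified Lean document; each statement's English description precedes it below -/
import Mathlib

section
/- Let P ⊂ ℝ^D be finite and let X̂ = {b̂₁,…,b̂_m} where each bᵢ is the barycenter of a k-subset Sᵢ ⊆ P with weight w(bᵢ) = −(1/k)Σ_{p∈Sᵢ}‖bᵢ − p‖². Suppose f : ℝ^D → ℝ^d is linear with (1−ε)‖x−y‖² ≤ ‖f(x)−f(y)‖² ≤ (1+ε)‖x−y‖² for all x,y ∈ P. Then the pairwise power distances satisfy (1−ε) D(b̂ᵢ, b̂ⱼ) ≤ D(f(bᵢ)^, f(bⱼ)^) ≤ (1+ε) D(b̂ᵢ, b̂ⱼ) for all i, j, where the weights in the image are recomputed from the image points f(Sᵢ). -/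
/-! By the parallel axis theorem, the power distance between the weighted barycenters of
`S₁` and `S₂` is the mean of `‖p - q‖²` over `p ∈ S₁`, `q ∈ S₂`. A mean of pairwise squared
distances inherits any multiplicative distortion bound on those distances. -/

open Finset

variable {ι E : Type*} [NormedAddCommGroup E] [InnerProductSpace ℝ E]

lemma sum_centroid_sub (S : Finset ι) (q : ι → E) :
    ∑ i ∈ S, ((#S : ℝ)⁻¹ • ∑ j ∈ S, q j - q i) = 0 := by
  rcases S.eq_empty_or_nonempty with rfl | hS
  · simp
  rw [sum_sub_distrib, sum_const, ← Nat.cast_smul_eq_nsmul ℝ, smul_smul,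
    mul_inv_cancel₀ (by positivity), one_smul, sub_self]

lemma sum_norm_sub_sq_eq_card_mul_add (S : Finset ι) (q : ι → E) {c : E}
    (hc : c = (#S : ℝ)⁻¹ • ∑ i ∈ S, q i) (x : E) :
    ∑ i ∈ S, ‖x - q i‖ ^ 2 = #S * ‖x - c‖ ^ 2 + ∑ i ∈ S, ‖c - q i‖ ^ 2 := by
  have split : ∀ i, ‖x - q i‖ ^ 2 = ‖x - c‖ ^ 2 + 2 * inner ℝ (x - c) (c - q i) + ‖c - q i‖ ^ 2 :=
    fun i => by rw [← norm_add_sq_real, sub_add_sub_cancel]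
  simp only [split, sum_add_distrib, ← mul_sum, ← inner_sum, hc, sum_centroid_sub,
    inner_zero_right, mul_zero, add_zero, sum_const, nsmul_eq_mul]

lemma powerDist_barycenters_eq_mean_sq_dist {S₁ S₂ : Finset ι} (h₁ : S₁.Nonempty) (h₂ : S₂.Nonempty)
    (q : ι → E) {b₁ b₂ : E}
    (hb₁ : b₁ = (#S₁ : ℝ)⁻¹ • ∑ i ∈ S₁, q i) (hb₂ : b₂ = (#S₂ : ℝ)⁻¹ • ∑ i ∈ S₂, q i)
    {w₁ w₂ : ℝ}
    (hw₁ : w₁ = -((#S₁ : ℝ)⁻¹ * ∑ i ∈ S₁, ‖b₁ - q i‖ ^ 2))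
    (hw₂ : w₂ = -((#S₂ : ℝ)⁻¹ * ∑ i ∈ S₂, ‖b₂ - q i‖ ^ 2)) :
    ‖b₁ - b₂‖ ^ 2 - w₁ - w₂ = (#S₁ * #S₂ : ℝ)⁻¹ * ∑ i ∈ S₁, ∑ j ∈ S₂, ‖q i - q j‖ ^ 2 := by
  have sum_over_S₂ : ∑ i ∈ S₁, ∑ j ∈ S₂, ‖q i - q j‖ ^ 2
      = #S₂ * ∑ i ∈ S₁, ‖b₂ - q i‖ ^ 2 + #S₁ * ∑ j ∈ S₂, ‖b₂ - q j‖ ^ 2 := by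
    rw [sum_congr rfl fun i _ => sum_norm_sub_sq_eq_card_mul_add S₂ q hb₂ (q i)]
    simp only [sum_add_distrib, ← mul_sum, norm_sub_rev (q _) b₂, sum_const, nsmul_eq_mul]
  have sum_over_S₁ : ∑ i ∈ S₁, ‖b₂ - q i‖ ^ 2 = #S₁ * ‖b₁ - b₂‖ ^ 2 + ∑ i ∈ S₁, ‖b₁ - q i‖ ^ 2 := by
    rw [sum_norm_sub_sq_eq_card_mul_add S₁ q hb₁, norm_sub_rev]
  have hc₁ : (#S₁ : ℝ) ≠ 0 := by positivity
  have hc₂ : (#S₂ : ℝ) ≠ 0 := by positivity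
  rw [sum_over_S₂, sum_over_S₁, hw₁, hw₂]
  field_simp
  ring

theorem stmt_10_general {D d n k : ℕ} (hk0 : 0 < k) (ε : ℝ)
    (p : Fin n → EuclideanSpace ℝ (Fin D))
    (f : EuclideanSpace ℝ (Fin D) →ₗ[ℝ] EuclideanSpace ℝ (Fin d))
    (hf : ∀ i j : Fin n,
      (1 - ε) * ‖p i - p j‖ ^ 2 ≤ ‖f (p i) - f (p j)‖ ^ 2 ∧
      ‖f (p i) - f (p j)‖ ^ 2 ≤ (1 + ε) * ‖p i - p j‖ ^ 2)
    (S₁ S₂ : Finset (Fin n)) (hS₁ : S₁.card = k) (hS₂ : S₂.card = k)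
    -- barycenters and weights in the original space
    (b₁ b₂ : EuclideanSpace ℝ (Fin D))
    (hb₁ : b₁ = (1 / (k : ℝ)) • ∑ i ∈ S₁, p i)
    (hb₂ : b₂ = (1 / (k : ℝ)) • ∑ i ∈ S₂, p i)
    (w₁ w₂ : ℝ)
    (hw₁ : w₁ = -((1 / (k : ℝ)) * ∑ i ∈ S₁, ‖b₁ - p i‖ ^ 2))
    (hw₂ : w₂ = -((1 / (k : ℝ)) * ∑ i ∈ S₂, ‖b₂ - p i‖ ^ 2))
    -- barycenters and recomputed weights in the image space
    (b₁' b₂' : EuclideanSpace ℝ (Fin d))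
    (hb₁' : b₁' = (1 / (k : ℝ)) • ∑ i ∈ S₁, f (p i))
    (hb₂' : b₂' = (1 / (k : ℝ)) • ∑ i ∈ S₂, f (p i))
    (w₁' w₂' : ℝ)
    (hw₁' : w₁' = -((1 / (k : ℝ)) * ∑ i ∈ S₁, ‖b₁' - f (p i)‖ ^ 2))
    (hw₂' : w₂' = -((1 / (k : ℝ)) * ∑ i ∈ S₂, ‖b₂' - f (p i)‖ ^ 2)) :
    (1 - ε) * (‖b₁ - b₂‖ ^ 2 - w₁ - w₂) ≤ ‖b₁' - b₂'‖ ^ 2 - w₁' - w₂' ∧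
    ‖b₁' - b₂'‖ ^ 2 - w₁' - w₂' ≤ (1 + ε) * (‖b₁ - b₂‖ ^ 2 - w₁ - w₂) := by
  have h₁ : S₁.Nonempty := card_pos.mp (hS₁ ▸ hk0)
  have h₂ : S₂.Nonempty := card_pos.mp (hS₂ ▸ hk0)
  rw [one_div, ← hS₁] at hb₁ hw₁ hb₁' hw₁'
  rw [one_div, ← hS₂] at hb₂ hw₂ hb₂' hw₂'
  rw [powerDist_barycenters_eq_mean_sq_dist h₁ h₂ p hb₁ hb₂ hw₁ hw₂,
    powerDist_barycenters_eq_mean_sq_dist h₁ h₂ (fun i => f (p i)) hb₁' hb₂' hw₁' hw₂']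
  constructor
  · rw [mul_left_comm]
    gcongr
    simp only [mul_sum]
    gcongr with i _ j _
    exact (hf i j).1
  · rw [mul_left_comm (1 + ε)]
    gcongr
    simp only [mul_sum]
    gcongr with i _ j _
    exact (hf i j).2

theorem stmt_10 {D d n k : ℕ} (hk0 : 0 < k) (ε : ℝ) (hε0 : 0 < ε) (hε1 : ε < 1)
    (p : Fin n → EuclideanSpace ℝ (Fin D))
    (f : EuclideanSpace ℝ (Fin D) →ₗ[ℝ] EuclideanSpace ℝ (Fin d))
    (hf : ∀ i j : Fin n,
      (1 - ε) * ‖p i - p j‖ ^ 2 ≤ ‖f (p i) - f (p j)‖ ^ 2 ∧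
      ‖f (p i) - f (p j)‖ ^ 2 ≤ (1 + ε) * ‖p i - p j‖ ^ 2)
    (S₁ S₂ : Finset (Fin n)) (hS₁ : S₁.card = k) (hS₂ : S₂.card = k)
    -- barycenters and weights in the original space
    (b₁ b₂ : EuclideanSpace ℝ (Fin D))
    (hb₁ : b₁ = (1 / (k : ℝ)) • ∑ i ∈ S₁, p i)
    (hb₂ : b₂ = (1 / (k : ℝ)) • ∑ i ∈ S₂, p i)
    (w₁ w₂ : ℝ)
    (hw₁ : w₁ = -((1 / (k : ℝ)) * ∑ i ∈ S₁, ‖b₁ - p i‖ ^ 2))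
    (hw₂ : w₂ = -((1 / (k : ℝ)) * ∑ i ∈ S₂, ‖b₂ - p i‖ ^ 2))
    -- barycenters and recomputed weights in the image space
    (b₁' b₂' : EuclideanSpace ℝ (Fin d))
    (hb₁' : b₁' = (1 / (k : ℝ)) • ∑ i ∈ S₁, f (p i))
    (hb₂' : b₂' = (1 / (k : ℝ)) • ∑ i ∈ S₂, f (p i))
    (w₁' w₂' : ℝ)
    (hw₁' : w₁' = -((1 / (k : ℝ)) * ∑ i ∈ S₁, ‖b₁' - f (p i)‖ ^ 2))
    (hw₂' : w₂' = -((1 / (k : ℝ)) * ∑ i ∈ S₂, ‖b₂' - f (p i)‖ ^ 2)) :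
    (1 - ε) * (‖b₁ - b₂‖ ^ 2 - w₁ - w₂) ≤ ‖b₁' - b₂'‖ ^ 2 - w₁' - w₂' ∧
    ‖b₁' - b₂'‖ ^ 2 - w₁' - w₂' ≤ (1 + ε) * (‖b₁ - b₂‖ ^ 2 - w₁ - w₂) :=
  stmt_10_general hk0 ε p f hf S₁ S₂ hS₁ hS₂ b₁ b₂ hb₁ hb₂ w₁ w₂ hw₁ hw₂ b₁' b₂' hb₁' hb₂' w₁' w₂'
    hw₁' hw₂'
end

section
/- Let σ̂ = {b̂₁,…,b̂_m} be weighted barycenters of k-subsets of a finite point set P ⊂ ℝ^D (with weights w(bᵢ) = −(1/k)Σ_{p∈Sᵢ}‖bᵢ−p‖²), and let f : ℝ^D → ℝ^d be a linear map satisfying (1−ε)‖x−y‖² ≤ ‖f(x)−f(y)‖² ≤ (1+ε)‖x−y‖² for all x,y ∈ P. Then (1−ε)·rad²(σ̂) ≤ rad²(f(σ)^) ≤ (1+ε)·rad²(σ̂), where rad²(Ŷ) = min_x max_i D(x, ŷᵢ) and the image weights are recomputed from the image points. -/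
/-!
Let `νᵢ` be the uniform probability vector on `Sᵢ`, so that `bᵢ` is its barycenter. By the
parallel-axis theorem the power distance `‖x - bᵢ‖² - wᵢ` equals `∑ₗ νᵢ(l) ‖x - pₗ‖²`, and the
moment of inertia of a probability vector `μ` about its barycenter equals
`½ ∑ₗ ∑ₗ' μₗ μₗ' ‖pₗ - pₗ'‖²`. A minimax argument identifies `rad²` with the largest moment of
inertia of a mixture `μ` of the `νᵢ`: the inertia of `μ` is at most its averaged squared distance
to any centre, hence at most the maximal power at that centre, and for a maximising `μ`
first-order optimality in the direction of each `νᵢ` shows that the barycenter of `μ` is a centre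
attaining this bound. The pairwise form is distorted by `f` by a factor in `[1 - ε, 1 + ε]`, and
therefore so is `rad²`.
-/

open Finset

/-- The squared radius of the smallest enclosing ball of a finite family of
weighted points: the infimum over centers of the maximum power distance. -/
noncomputable def rad2 {E : Type*} [NormedAddCommGroup E] {m : ℕ} (hm : 0 < m)
    (p : Fin m → E) (w : Fin m → ℝ) : ℝ :=
  ⨅ x : E, Finset.univ.sup' (Finset.univ_nonempty_iff.mpr ⟨⟨0, hm⟩⟩)
    (fun i => ‖x - p i‖ ^ 2 - w i)

open Filter Topology
open scoped InnerProductSpace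

def barycenter {ι M : Type*} [Fintype ι] [AddCommMonoid M] [Module ℝ M]
    (q : ι → M) (μ : ι → ℝ) : M :=
  ∑ l, μ l • q l

section Inertia

variable {ι E F : Type*} [Fintype ι] [NormedAddCommGroup E] [InnerProductSpace ℝ E]
  [NormedAddCommGroup F] [InnerProductSpace ℝ F]

def inertia (q : ι → E) (μ : ι → ℝ) : ℝ :=
  ∑ l, μ l * ‖barycenter q μ - q l‖ ^ 2

theorem sum_mul_norm_sub_sq_eq_add_inertia {q : ι → E} {μ : ι → ℝ} (hμ : ∑ l, μ l = 1)
    (x : E) : ∑ l, μ l * ‖x - q l‖ ^ 2 = ‖x - barycenter q μ‖ ^ 2 + inertia q μ := by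
  set c := barycenter q μ
  have hcross : ∑ l, μ l * ⟪x - c, c - q l⟫_ℝ = 0 := by
    simp_rw [← real_inner_smul_right, ← inner_sum, smul_sub, sum_sub_distrib, ← sum_smul, hμ,
      one_smul]
    simp [c, barycenter]
  calc ∑ l, μ l * ‖x - q l‖ ^ 2
      = ∑ l, (μ l * ‖x - c‖ ^ 2 + 2 * (μ l * ⟪x - c, c - q l⟫_ℝ) + μ l * ‖c - q l‖ ^ 2) :=
        sum_congr rfl fun l _ => by rw [← sub_add_sub_cancel x c, norm_add_sq_real]; ring
    _ = ‖x - c‖ ^ 2 + inertia q μ := by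
        rw [sum_add_distrib, sum_add_distrib, ← sum_mul, ← mul_sum, hcross, hμ, inertia]; ring

theorem inertia_eq_half_sum_sum {q : ι → E} {μ : ι → ℝ} (hμ : ∑ l, μ l = 1) :
    inertia q μ = 1 / 2 * ∑ l, ∑ l', μ l * μ l' * ‖q l - q l'‖ ^ 2 := by
  have h : ∀ l, ∑ l', μ l * μ l' * ‖q l - q l'‖ ^ 2 =
      μ l * ‖barycenter q μ - q l‖ ^ 2 + μ l * inertia q μ := by
    intro l
    simp_rw [mul_assoc, ← mul_sum, sum_mul_norm_sub_sq_eq_add_inertia hμ, norm_sub_rev]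
    ring
  rw [sum_congr rfl fun l _ => h l, sum_add_distrib, ← sum_mul, hμ]
  unfold inertia
  ring

theorem mul_inertia_le_mul_inertia {q : ι → E} {q' : ι → F} {μ : ι → ℝ} {a b : ℝ}
    (hμ : μ ∈ stdSimplex ℝ ι) (h : ∀ l l', a * ‖q l - q l'‖ ^ 2 ≤ b * ‖q' l - q' l'‖ ^ 2) :
    a * inertia q μ ≤ b * inertia q' μ := by
  rw [inertia_eq_half_sum_sum hμ.2, inertia_eq_half_sum_sum hμ.2, mul_left_comm,
    mul_left_comm b]
  refine mul_le_mul_of_nonneg_left ?_ (by norm_num)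
  simp_rw [mul_sum]
  refine sum_le_sum fun l _ => sum_le_sum fun l' _ => ?_
  rw [mul_left_comm, mul_left_comm b]
  exact mul_le_mul_of_nonneg_left (h l l') (mul_nonneg (hμ.1 l) (hμ.1 l'))

theorem sum_mul_norm_barycenter_sub_sq_le_inertia {q : ι → E} {μ ν : ι → ℝ}
    (hμ : ∑ l, μ l = 1) (hν : ∑ l, ν l = 1)
    (hmax : ∀ t ∈ Set.Ioc (0 : ℝ) 1, inertia q ((1 - t) • μ + t • ν) ≤ inertia q μ) :
    ∑ l, ν l * ‖barycenter q μ - q l‖ ^ 2 ≤ inertia q μ := by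
  set c := barycenter q μ
  set C := ‖c - barycenter q ν‖ ^ 2
  have key : ∀ t ∈ Set.Ioc (0 : ℝ) 1, ∑ l, ν l * ‖c - q l‖ ^ 2 - inertia q μ ≤ t * C := by
    rintro t ⟨ht0, ht1⟩
    -- parallel-axis theorem at `c` for `μₜ = (1 - t) • μ + t • ν`:
    -- `(1 - t) inertia μ + t ∑ ν ‖c - q‖² = t² C + inertia μₜ`, and `inertia μₜ ≤ inertia μ`
    have hsum : ∑ l, ((1 - t) • μ + t • ν) l = 1 := by
      simp [sum_add_distrib, ← mul_sum, hμ, hν]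
    have hpa := sum_mul_norm_sub_sq_eq_add_inertia (q := q) hsum c
    have hlin : ∑ l, ((1 - t) • μ + t • ν) l * ‖c - q l‖ ^ 2 =
        (1 - t) * inertia q μ + t * ∑ l, ν l * ‖c - q l‖ ^ 2 := by
      simp only [Pi.add_apply, Pi.smul_apply, smul_eq_mul, add_mul, sum_add_distrib, mul_assoc,
        ← mul_sum]
      rfl
    have hbary : c - barycenter q ((1 - t) • μ + t • ν) = t • (c - barycenter q ν) := by
      simp only [c, barycenter, Pi.add_apply, Pi.smul_apply, smul_eq_mul, add_smul, mul_smul,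
        sum_add_distrib, ← smul_sum]
      module
    rw [hlin, hbary, norm_smul, mul_pow, Real.norm_eq_abs, sq_abs] at hpa
    have : t * (∑ l, ν l * ‖c - q l‖ ^ 2 - inertia q μ) ≤ t * (t * C) := by
      linarith [hmax t ⟨ht0, ht1⟩]
    exact le_of_mul_le_mul_left this ht0
  have hlim : Tendsto (fun t => t * C) (𝓝[>] 0) (𝓝 0) :=
    ((continuous_mul_const C).tendsto' 0 0 (zero_mul C)).mono_left nhdsWithin_le_nhds
  exact sub_nonpos.mp (ge_of_tendsto hlim (eventually_of_mem (Ioc_mem_nhdsGT one_pos) key))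

end Inertia

theorem convexHull_range_subset_stdSimplex {ι κ : Type*} [Fintype ι] {ν : κ → ι → ℝ}
    (hν : ∀ i, ν i ∈ stdSimplex ℝ ι) : convexHull ℝ (Set.range ν) ⊆ stdSimplex ℝ ι :=
  convexHull_min (Set.range_subset_iff.2 hν) (convex_stdSimplex ℝ ι)

section Duality

variable {ι κ E : Type*} [Fintype ι] [Fintype κ] [NormedAddCommGroup E] [InnerProductSpace ℝ E]

theorem inertia_le_sup'_sum_mul_norm_sub_sq [Nonempty κ] (q : ι → E) {ν : κ → ι → ℝ}
    (hν : ∀ i, ν i ∈ stdSimplex ℝ ι) {μ : ι → ℝ} (hμ : μ ∈ convexHull ℝ (Set.range ν)) (x : E) :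
    inertia q μ ≤ univ.sup' univ_nonempty fun i => ∑ l, ν i l * ‖x - q l‖ ^ 2 := by
  obtain ⟨_, ⟨i, rfl⟩, hi⟩ :=
    ((Fintype.linearCombination ℝ fun l => ‖x - q l‖ ^ 2).convexOn
      (convex_convexHull ℝ _)).exists_ge_of_mem_convexHull (subset_convexHull ℝ _) hμ
  simp only [Fintype.linearCombination_apply, smul_eq_mul] at hi
  calc inertia q μ ≤ ∑ l, μ l * ‖x - q l‖ ^ 2 := by
        rw [sum_mul_norm_sub_sq_eq_add_inertia (convexHull_range_subset_stdSimplex hν hμ).2]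
        exact le_add_of_nonneg_left (sq_nonneg _)
    _ ≤ ∑ l, ν i l * ‖x - q l‖ ^ 2 := hi
    _ ≤ _ := le_sup' (fun i => ∑ l, ν i l * ‖x - q l‖ ^ 2) (mem_univ i)

theorem isGreatest_inertia_convexHull [Nonempty κ] (q : ι → E) {ν : κ → ι → ℝ}
    (hν : ∀ i, ν i ∈ stdSimplex ℝ ι) :
    IsGreatest (inertia q '' convexHull ℝ (Set.range ν))
      (⨅ x, univ.sup' univ_nonempty fun i => ∑ l, ν i l * ‖x - q l‖ ^ 2) := by
  have hcont : Continuous (inertia q) := by unfold inertia barycenter; fun_prop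
  obtain ⟨μ, hμ, hmax⟩ := ((Set.finite_range ν).isCompact_convexHull ℝ).exists_isMaxOn
    ((Set.range_nonempty ν).mono (subset_convexHull ℝ _)) hcont.continuousOn
  have hweak := inertia_le_sup'_sum_mul_norm_sub_sq q hν hμ
  have hstrong : ∀ i, ∑ l, ν i l * ‖barycenter q μ - q l‖ ^ 2 ≤ inertia q μ := fun i =>
    sum_mul_norm_barycenter_sub_sq_le_inertia (convexHull_range_subset_stdSimplex hν hμ).2
      (hν i).2 fun t ht => hmax <| convex_convexHull ℝ _ hμ
        (subset_convexHull ℝ _ ⟨i, rfl⟩) (by linarith [ht.2]) ht.1.le (by ring)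
  have hleast : IsLeast (Set.range fun x => univ.sup' univ_nonempty fun i =>
      ∑ l, ν i l * ‖x - q l‖ ^ 2) (inertia q μ) :=
    ⟨⟨barycenter q μ, le_antisymm (sup'_le _ _ fun i _ => hstrong i) (hweak _)⟩,
      Set.forall_mem_range.2 hweak⟩
  rw [hleast.isGLB.ciInf_eq]
  exact ⟨⟨μ, hμ, rfl⟩, Set.forall_mem_image.2 fun _ hx => hmax hx⟩

end Duality

section UniformWeights

variable {ι : Type*} [Fintype ι] [DecidableEq ι]

noncomputable def uniformWeights (s : Finset ι) : ι → ℝ :=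
  fun l => if l ∈ s then (#s : ℝ)⁻¹ else 0

theorem sum_uniformWeights_smul {M : Type*} [AddCommMonoid M] [Module ℝ M] (s : Finset ι)
    (g : ι → M) : ∑ l, uniformWeights s l • g l = (#s : ℝ)⁻¹ • ∑ l ∈ s, g l := by
  simp [uniformWeights, ite_smul, sum_ite_mem, smul_sum]

theorem sum_uniformWeights_mul (s : Finset ι) (g : ι → ℝ) :
    ∑ l, uniformWeights s l * g l = (#s : ℝ)⁻¹ * ∑ l ∈ s, g l :=
  sum_uniformWeights_smul s g

theorem uniformWeights_mem_stdSimplex {s : Finset ι} (hs : s.Nonempty) :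
    uniformWeights s ∈ stdSimplex ℝ ι := by
  refine ⟨fun l => by unfold uniformWeights; split_ifs <;> positivity, ?_⟩
  simpa [hs.card_pos.ne'] using sum_uniformWeights_mul s fun _ => 1

end UniformWeights

theorem isGreatest_inertia_rad2 {ι E : Type*} [Fintype ι] [DecidableEq ι]
    [NormedAddCommGroup E] [InnerProductSpace ℝ E] {m k : ℕ} (hm : 0 < m) (q : ι → E)
    {S : Fin m → Finset ι} (hS : ∀ i, #(S i) = k)
    (hν : ∀ i, uniformWeights (S i) ∈ stdSimplex ℝ ι) {b : Fin m → E}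
    (hb : ∀ i, b i = (1 / (k : ℝ)) • ∑ l ∈ S i, q l) {w : Fin m → ℝ}
    (hw : ∀ i, w i = -((1 / (k : ℝ)) * ∑ l ∈ S i, ‖b i - q l‖ ^ 2)) :
    IsGreatest (inertia q '' convexHull ℝ (Set.range fun i => uniformWeights (S i)))
      (rad2 hm b w) := by
  have : Nonempty (Fin m) := ⟨⟨0, hm⟩⟩
  convert isGreatest_inertia_convexHull q hν using 1
  refine iInf_congr fun x => sup'_congr _ rfl fun i _ => ?_
  have hbi : barycenter q (uniformWeights (S i)) = b i := by
    rw [hb, barycenter, sum_uniformWeights_smul, hS, one_div]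
  rw [sum_mul_norm_sub_sq_eq_add_inertia (hν i).2, inertia, hbi, sum_uniformWeights_mul, hS, hw]
  ring

theorem stmt_11_general {D d n k m : ℕ} (hk0 : 0 < k) (hm : 0 < m)
    (ε : ℝ) (hε0 : 0 < ε)
    (p : Fin n → EuclideanSpace ℝ (Fin D))
    (f : EuclideanSpace ℝ (Fin D) →ₗ[ℝ] EuclideanSpace ℝ (Fin d))
    (hf : ∀ i j : Fin n,
      (1 - ε) * ‖p i - p j‖ ^ 2 ≤ ‖f (p i) - f (p j)‖ ^ 2 ∧
      ‖f (p i) - f (p j)‖ ^ 2 ≤ (1 + ε) * ‖p i - p j‖ ^ 2)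
    (S : Fin m → Finset (Fin n)) (hS : ∀ i, (S i).card = k)
    -- barycenters and weights in the original space
    (b : Fin m → EuclideanSpace ℝ (Fin D))
    (hb : ∀ i, b i = (1 / (k : ℝ)) • ∑ l ∈ S i, p l)
    (w : Fin m → ℝ)
    (hw : ∀ i, w i = -((1 / (k : ℝ)) * ∑ l ∈ S i, ‖b i - p l‖ ^ 2))
    -- barycenters and recomputed weights in the image space
    (b' : Fin m → EuclideanSpace ℝ (Fin d))
    (hb' : ∀ i, b' i = (1 / (k : ℝ)) • ∑ l ∈ S i, f (p l))
    (w' : Fin m → ℝ)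
    (hw' : ∀ i, w' i = -((1 / (k : ℝ)) * ∑ l ∈ S i, ‖b' i - f (p l)‖ ^ 2)) :
    (1 - ε) * rad2 hm b w ≤ rad2 hm b' w' ∧
    rad2 hm b' w' ≤ (1 + ε) * rad2 hm b w := by
  have hν i : uniformWeights (S i) ∈ stdSimplex ℝ (Fin n) :=
    uniformWeights_mem_stdSimplex (card_pos.1 (hS i ▸ hk0))
  have hK := convexHull_range_subset_stdSimplex hν
  have hrad := isGreatest_inertia_rad2 hm p hS hν hb hw
  have hrad' := isGreatest_inertia_rad2 hm (fun l => f (p l)) hS hν hb' hw'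
  constructor
  · obtain ⟨μ, hμ, hμrad⟩ := hrad.1
    calc (1 - ε) * rad2 hm b w = (1 - ε) * inertia p μ := by rw [hμrad]
      _ ≤ 1 * inertia (fun l => f (p l)) μ :=
          mul_inertia_le_mul_inertia (hK hμ) fun l l' => by simpa using (hf l l').1
      _ ≤ rad2 hm b' w' := by rw [one_mul]; exact hrad'.2 ⟨μ, hμ, rfl⟩
  · obtain ⟨μ, hμ, hμrad⟩ := hrad'.1
    calc rad2 hm b' w' = 1 * inertia (fun l => f (p l)) μ := by rw [one_mul, hμrad]
      _ ≤ (1 + ε) * inertia p μ :=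
          mul_inertia_le_mul_inertia (hK hμ) fun l l' => by simpa using (hf l l').2
      _ ≤ (1 + ε) * rad2 hm b w :=
          mul_le_mul_of_nonneg_left (hrad.2 ⟨μ, hμ, rfl⟩) (by linarith)

theorem stmt_11 {D d n k m : ℕ} (hk0 : 0 < k) (hm : 0 < m)
    (ε : ℝ) (hε0 : 0 < ε) (hε1 : ε < 1)
    (p : Fin n → EuclideanSpace ℝ (Fin D))
    (f : EuclideanSpace ℝ (Fin D) →ₗ[ℝ] EuclideanSpace ℝ (Fin d))
    (hf : ∀ i j : Fin n,
      (1 - ε) * ‖p i - p j‖ ^ 2 ≤ ‖f (p i) - f (p j)‖ ^ 2 ∧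
      ‖f (p i) - f (p j)‖ ^ 2 ≤ (1 + ε) * ‖p i - p j‖ ^ 2)
    (S : Fin m → Finset (Fin n)) (hS : ∀ i, (S i).card = k)
    -- barycenters and weights in the original space
    (b : Fin m → EuclideanSpace ℝ (Fin D))
    (hb : ∀ i, b i = (1 / (k : ℝ)) • ∑ l ∈ S i, p l)
    (w : Fin m → ℝ)
    (hw : ∀ i, w i = -((1 / (k : ℝ)) * ∑ l ∈ S i, ‖b i - p l‖ ^ 2))
    -- barycenters and recomputed weights in the image space
    (b' : Fin m → EuclideanSpace ℝ (Fin d))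
    (hb' : ∀ i, b' i = (1 / (k : ℝ)) • ∑ l ∈ S i, f (p l))
    (w' : Fin m → ℝ)
    (hw' : ∀ i, w' i = -((1 / (k : ℝ)) * ∑ l ∈ S i, ‖b' i - f (p l)‖ ^ 2)) :
    (1 - ε) * rad2 hm b w ≤ rad2 hm b' w' ∧
    rad2 hm b' w' ≤ (1 + ε) * rad2 hm b w :=
  stmt_11_general hk0 hm ε hε0 p f hf S hS b hb w hw b' hb' w' hw'
end

section
/- For a finite set P = {p₁,…,p_m} of (unweighted) points in ℝ^D, the squared circumradius of the minimum enclosing ball satisfies rad²(P) = (1/2) Σ_{i,j∈I} λᵢλⱼ ‖pᵢ − pⱼ‖², where c = Σ_{i∈I} λᵢ pᵢ is the center of the minimum enclosing ball expressed as a convex combination of the points I on its boundary. -/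
open Finset

/-!
The squared distance to the circumcentre is `rad²(P)` at every point of `I`, so the claim is the
case of equal distances of the identity `∑ᵢ ∑ⱼ λᵢ λⱼ ‖pᵢ - pⱼ‖² = 2 ∑ᵢ λᵢ ‖c - pᵢ‖²`, valid for any
affine combination `c = ∑ᵢ λᵢ pᵢ`. That identity follows by averaging the parallel axis theorem
`∑ⱼ λⱼ ‖x - pⱼ‖² = ‖x - c‖² + ∑ⱼ λⱼ ‖c - pⱼ‖²` over `x = pᵢ`.
-/

section WeightedSquaredDistances

variable {E ι : Type*} [NormedAddCommGroup E] [InnerProductSpace ℝ E]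
  {s : Finset ι} {w : ι → ℝ} {p : ι → E} {c : E}

theorem sum_smul_sub_eq_zero_of_eq_sum_smul (hw : ∑ j ∈ s, w j = 1)
    (hc : c = ∑ j ∈ s, w j • p j) : ∑ j ∈ s, w j • (c - p j) = 0 := by
  simp only [smul_sub, sum_sub_distrib, ← sum_smul, hw, one_smul, ← hc, sub_self]

theorem sum_mul_norm_sub_sq_eq_norm_sub_sq_add (hw : ∑ j ∈ s, w j = 1)
    (hc : c = ∑ j ∈ s, w j • p j) (x : E) :
    ∑ j ∈ s, w j * ‖x - p j‖ ^ 2 = ‖x - c‖ ^ 2 + ∑ j ∈ s, w j * ‖c - p j‖ ^ 2 := by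
  have hcross : ∑ j ∈ s, w j * inner ℝ (x - c) (c - p j) = 0 := by
    simp only [← real_inner_smul_right, ← inner_sum,
      sum_smul_sub_eq_zero_of_eq_sum_smul hw hc, inner_zero_right]
  calc ∑ j ∈ s, w j * ‖x - p j‖ ^ 2
      = ∑ j ∈ s, (w j * ‖x - c‖ ^ 2 + 2 * (w j * inner ℝ (x - c) (c - p j))
          + w j * ‖c - p j‖ ^ 2) := by
        refine sum_congr rfl fun j _ => ?_
        rw [← sub_add_sub_cancel x c (p j), norm_add_sq_real]
        ring
    _ = ‖x - c‖ ^ 2 + ∑ j ∈ s, w j * ‖c - p j‖ ^ 2 := by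
        rw [sum_add_distrib, sum_add_distrib, ← sum_mul, ← mul_sum, hw, hcross]
        ring

theorem sum_sum_mul_norm_sub_sq_eq_two_mul (hw : ∑ j ∈ s, w j = 1)
    (hc : c = ∑ j ∈ s, w j • p j) :
    ∑ i ∈ s, ∑ j ∈ s, w i * w j * ‖p i - p j‖ ^ 2 = 2 * ∑ i ∈ s, w i * ‖c - p i‖ ^ 2 := by
  calc ∑ i ∈ s, ∑ j ∈ s, w i * w j * ‖p i - p j‖ ^ 2
      = ∑ i ∈ s, w i * (‖p i - c‖ ^ 2 + ∑ j ∈ s, w j * ‖c - p j‖ ^ 2) := by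
        refine sum_congr rfl fun i _ => ?_
        rw [← sum_mul_norm_sub_sq_eq_norm_sub_sq_add hw hc, mul_sum]
        simp only [mul_assoc]
    _ = 2 * ∑ i ∈ s, w i * ‖c - p i‖ ^ 2 := by
        simp only [mul_add, sum_add_distrib, ← sum_mul, hw, norm_sub_rev (p _) c]
        ring

end WeightedSquaredDistances

theorem stmt_15_general {D m : ℕ}
    (p : Fin m → EuclideanSpace ℝ (Fin D))
    (hne : (Finset.univ : Finset (Fin m)).Nonempty)
    (c : EuclideanSpace ℝ (Fin D))
    (I : Finset (Fin m))
    (hI : I = Finset.univ.filter (fun i =>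
      ‖c - p i‖ ^ 2 = Finset.univ.sup' hne (fun j => ‖c - p j‖ ^ 2)))
    (lam : Fin m → ℝ)
    (hsum : ∑ i ∈ I, lam i = 1) (hcc : c = ∑ i ∈ I, lam i • p i) :
    Finset.univ.sup' hne (fun i => ‖c - p i‖ ^ 2) =
      (1 / 2) * ∑ i ∈ I, ∑ j ∈ I, lam i * lam j * ‖p i - p j‖ ^ 2 := by
  have hboundary : ∀ i ∈ I, ‖c - p i‖ ^ 2 = univ.sup' hne (fun j => ‖c - p j‖ ^ 2) := by
    intro i hi
    rw [hI] at hi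
    exact (mem_filter.mp hi).2
  rw [sum_sum_mul_norm_sub_sq_eq_two_mul hsum hcc, sum_congr rfl fun i hi => by rw [hboundary i hi],
    ← sum_mul, hsum]
  ring

theorem stmt_15 {D m : ℕ}
    (p : Fin m → EuclideanSpace ℝ (Fin D))
    (hne : (Finset.univ : Finset (Fin m)).Nonempty)
    (c : EuclideanSpace ℝ (Fin D))
    (hc : ∀ y, Finset.univ.sup' hne (fun i => ‖c - p i‖ ^ 2) ≤
          Finset.univ.sup' hne (fun i => ‖y - p i‖ ^ 2))
    (I : Finset (Fin m))
    (hI : I = Finset.univ.filter (fun i =>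
      ‖c - p i‖ ^ 2 = Finset.univ.sup' hne (fun j => ‖c - p j‖ ^ 2)))
    (lam : Fin m → ℝ) (hpos : ∀ i ∈ I, 0 < lam i)
    (hsum : ∑ i ∈ I, lam i = 1) (hcc : c = ∑ i ∈ I, lam i • p i) :
    Finset.univ.sup' hne (fun i => ‖c - p i‖ ^ 2) =
      (1 / 2) * ∑ i ∈ I, ∑ j ∈ I, lam i * lam j * ‖p i - p j‖ ^ 2 :=
  stmt_15_general p hne c I hI lam hsum hcc
end
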